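/- Let F be a field, let n ≥ 1 be an integer, and d ≥ 0. Let (c_p)_{p ∈ Fⁿ} be a finitely supported family of natural numbers such that the sum over p ∈ Fⁿ of the binomial coefficients C(c_p + n − 1, n) is strictly less than C(d+n, n). Then there exists a non-zero polynomial P ∈ F[x₁,…,xₙ] of total degree at most d such that P vanishes to order at least c_p at p for every p ∈ Fⁿ. -/

import Mathlib

/-!
Polynomials of total degree at most `d` in `n` variables form a space of dimension
`C(d + n, n)`: adding a slack variable, their monomials correspond to multisets of size `d`
on `n + 1` letters. After translating `p` to the origin, vanishing to order `c` at `p` says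
that the `C(c + n - 1, n)` coefficients of degree less than `c` vanish. These are linear
conditions, fewer than the dimension, so a nonzero polynomial satisfies all of them.
-/

open MvPolynomial Finsupp

def sumLeEquivOptionSumEq (σ : Type*) [Fintype σ] (m : ℕ) :
    {f : σ → ℕ // ∑ i, f i ≤ m} ≃ {g : Option σ → ℕ // ∑ o, g o = m} where
  toFun f := ⟨fun o => o.elim (m - ∑ i, f.1 i) f.1, by
    simpa [Fintype.sum_option] using Nat.sub_add_cancel f.2⟩
  invFun g := ⟨fun i => g.1 (some i), by
    have := g.2
    rw [Fintype.sum_option] at this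
    change ∑ i, g.1 (some i) ≤ m
    omega⟩
  left_inv _ := rfl
  right_inv g := by
    have := g.2
    rw [Fintype.sum_option] at this
    ext (_ | i)
    · change m - ∑ i, g.1 (some i) = g.1 none
      omega
    · rfl

theorem Finsupp.natCard_setOf_degree_le (σ : Type*) [Fintype σ] (m : ℕ) :
    Nat.card {s : σ →₀ ℕ | s.degree ≤ m} = (m + Fintype.card σ).choose (Fintype.card σ) := by
  classical
  have e : {s : σ →₀ ℕ | s.degree ≤ m} ≃ Sym (Option σ) m :=
    (equivFunOnFinite.subtypeEquiv fun s => by simp [degree_eq_sum]).trans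
      ((sumLeEquivOptionSumEq σ m).trans (Sym.equivNatSumOfFintype (Option σ) m).symm)
  rw [Nat.card_congr e, Nat.card_eq_fintype_card, Sym.card_sym_eq_choose, Fintype.card_option,
    show Fintype.card σ + 1 + m - 1 = m + Fintype.card σ by omega, Nat.choose_symm_add]

theorem Finsupp.natCard_setOf_degree_lt (σ : Type*) [Fintype σ] {k : ℕ} (hk : k ≠ 0) :
    Nat.card {s : σ →₀ ℕ | s.degree < k} = (k + Fintype.card σ - 1).choose (Fintype.card σ) := by
  obtain ⟨m, rfl⟩ := Nat.exists_eq_succ_of_ne_zero hk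
  simp_rw [Nat.lt_succ_iff, natCard_setOf_degree_le]
  congr 1
  omega

instance Finsupp.finite_setOf_degree_lt (σ : Type*) [Finite σ] (k : ℕ) :
    Finite {s : σ →₀ ℕ | s.degree < k} :=
  (finite_of_degree_lt k).to_subtype

theorem MvPolynomial.finrank_restrictTotalDegree (σ R : Type*) [Fintype σ] [CommRing R]
    [Nontrivial R] (m : ℕ) :
    Module.finrank R (restrictTotalDegree σ R m) = (m + Fintype.card σ).choose (Fintype.card σ) :=
  (Module.finrank_eq_nat_card_basis (basisRestrictSupport R _)).trans (natCard_setOf_degree_le σ m)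

namespace MvPolynomial

variable {σ R : Type*} [CommRing R]

noncomputable def translate (p : σ → R) : MvPolynomial σ R ≃ₐ[R] MvPolynomial σ R :=
  AlgEquiv.ofAlgHom (aeval fun i => X i + C (p i)) (aeval fun i => X i - C (p i))
    (by ext i; simp) (by ext i; simp)

theorem map_translate_span_X_sub_C (p : σ → R) :
    Ideal.map (translate p) (Ideal.span (Set.range fun i => X i - C (p i))) = idealOfVars σ R := by
  rw [Ideal.map_span, ← Set.range_comp]
  congr 2
  ext i
  simp [translate]

theorem mem_pow_span_X_sub_C_iff {p : σ → R} {m : ℕ} {P : MvPolynomial σ R} :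
    P ∈ Ideal.span (Set.range fun i => X i - C (p i)) ^ m ↔
      ∀ s : σ →₀ ℕ, s.degree < m → coeff s (translate p P) = 0 := by
  rw [← mem_pow_idealOfVars_iff', ← map_translate_span_X_sub_C, ← Ideal.map_pow]
  exact (Ideal.apply_mem_of_equiv_iff (f := (translate p).toRingEquiv)).symm

noncomputable def lowOrderCoeffs (p : σ → R) (k : ℕ) :
    MvPolynomial σ R →ₗ[R] ({s : σ →₀ ℕ | s.degree < k} → R) :=
  LinearMap.pi fun s => lcoeff R s.1 ∘ₗ (translate p).toLinearMap

theorem lowOrderCoeffs_eq_zero_iff {p : σ → R} {k : ℕ} {P : MvPolynomial σ R} :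
    lowOrderCoeffs p k P = 0 ↔ P ∈ Ideal.span (Set.range fun i => X i - C (p i)) ^ k := by
  simp [lowOrderCoeffs, _root_.funext_iff, mem_pow_span_X_sub_C_iff]

end MvPolynomial

theorem interpolation_with_multiplicity_general (F : Type*) [Field F] (n : ℕ) (d : ℕ)
    (c : (Fin n → F) →₀ ℕ)
    (hc : ∑ p ∈ c.support, (c p + n - 1).choose n < (d + n).choose n) :
    ∃ P : MvPolynomial (Fin n) F, P ≠ 0 ∧ P.totalDegree ≤ d ∧
      ∀ p : Fin n → F,
        P ∈ (Ideal.span (Set.range fun i => MvPolynomial.X i - MvPolynomial.C (p i))) ^ (c p) := by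
  let V := restrictTotalDegree (Fin n) F d
  let conditions : V →ₗ[F] ((p : c.support) → {s : Fin n →₀ ℕ | s.degree < c p} → F) :=
    LinearMap.pi fun p => lowOrderCoeffs p.1 (c p) ∘ₗ V.subtype
  have hrank : Module.finrank F ((p : c.support) → {s : Fin n →₀ ℕ | s.degree < c p} → F) <
      Module.finrank F V := by
    rw [Module.finrank_pi_fintype, finrank_restrictTotalDegree, Fintype.card_fin]
    calc ∑ p : c.support, Module.finrank F ({s : Fin n →₀ ℕ | s.degree < c p} → F)
        = ∑ p : c.support, (c p + n - 1).choose n := by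
          refine Finset.sum_congr rfl fun p _ => ?_
          rw [Module.finrank_eq_nat_card_basis (Pi.basisFun F _),
            natCard_setOf_degree_lt _ (mem_support_iff.1 p.2), Fintype.card_fin]
      _ = ∑ p ∈ c.support, (c p + n - 1).choose n :=
          c.support.sum_coe_sort fun p => (c p + n - 1).choose n
      _ < (d + n).choose n := hc
  obtain ⟨⟨P, hPdeg⟩, hker, hP0⟩ := Submodule.exists_mem_ne_zero_of_ne_bot
    (LinearMap.ker_ne_bot_of_finrank_lt (f := conditions) hrank)
  refine ⟨P, fun h => hP0 (Subtype.ext h), (mem_restrictTotalDegree _ _ _).1 hPdeg, fun p => ?_⟩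
  by_cases hp : p ∈ c.support
  · exact lowOrderCoeffs_eq_zero_iff.1 (congrFun (LinearMap.mem_ker.1 hker) ⟨p, hp⟩)
  · simp [notMem_support_iff.1 hp]

/-- **Interpolation with multiplicity** (Lemma 2.3).  Here `P` vanishes to order at least
`m` at `p` iff `P` lies in the `m`-th power of the ideal generated by the `Xᵢ - pᵢ`. -/
theorem interpolation_with_multiplicity (F : Type*) [Field F] (n : ℕ) (hn : 1 ≤ n) (d : ℕ)
    (c : (Fin n → F) →₀ ℕ)
    (hc : ∑ p ∈ c.support, (c p + n - 1).choose n < (d + n).choose n) :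
    ∃ P : MvPolynomial (Fin n) F, P ≠ 0 ∧ P.totalDegree ≤ d ∧
      ∀ p : Fin n → F,
        P ∈ (Ideal.span (Set.range fun i => MvPolynomial.X i - MvPolynomial.C (p i))) ^ (c p) :=
  interpolation_with_multiplicity_general F n d c hc
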